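/- Let α ≥ 4 be a real number. Let ξ₁, ξ₂, μ₁, μ₂ ∈ ℝ and set ξ := ξ₁ + ξ₂, μ := μ₁ + μ₂, and assume ξ ξ₁ ξ₂ ≠ 0. Then |φ(ξ, μ) - φ(ξ₁, μ₁) - φ(ξ₂, μ₂)| ≥ |r_α(ξ, ξ₁)| (because r_α(ξ, ξ₁) and (μ₁ ξ₂ - μ₂ ξ₁)²/(ξ ξ₁ ξ₂) have the same sign). -/
import Mathlib


/-- The dispersion relation `φ(ξ, μ) = -ξ|ξ|^α + μ²/ξ`. -/
noncomputable def disp (α ξ μ : ℝ) : ℝ := -ξ * |ξ| ^ α + μ ^ 2 / ξ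

/-- `φ_α(ξ) = ξ|ξ|^α`. -/
noncomputable def phiAlpha (α ξ : ℝ) : ℝ := ξ * |ξ| ^ α

/-- The resonance function `r_α(ξ, ξ₁) = φ_α(ξ) - φ_α(ξ₁) - φ_α(ξ - ξ₁)`. -/
noncomputable def rAlpha (α ξ ξ₁ : ℝ) : ℝ := phiAlpha α ξ - phiAlpha α ξ₁ - phiAlpha α (ξ - ξ₁)

lemma real_superadd {p : ℝ} (hp : 1 ≤ p) {a b : ℝ} (ha : 0 ≤ a) (hb : 0 ≤ b) :
    a ^ p + b ^ p ≤ (a + b) ^ p := by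
  lift a to NNReal using ha
  lift b to NNReal using hb
  have h := NNReal.add_rpow_le_rpow_add a b hp
  exact_mod_cast h

lemma phi_odd (α x : ℝ) : phiAlpha α (-x) = -phiAlpha α x := by
  simp [phiAlpha, abs_neg]

lemma phi_superadd {α : ℝ} (hα : 1 ≤ α) {a b : ℝ} (ha : 0 ≤ a) (hb : 0 ≤ b) :
    phiAlpha α a + phiAlpha α b ≤ phiAlpha α (a + b) := by
  have key : ∀ x : ℝ, 0 ≤ x → phiAlpha α x = x ^ (α + 1) := by
    intro x hx
    rcases eq_or_lt_of_le hx with h | h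
    · simp [phiAlpha, ← h, Real.zero_rpow (by linarith : α + 1 ≠ 0),
        Real.zero_rpow (by linarith : α ≠ 0)]
    · rw [phiAlpha, abs_of_pos h, Real.rpow_add h, Real.rpow_one]; ring
  rw [key a ha, key b hb, key (a + b) (by linarith)]
  exact real_superadd (by linarith) ha hb

/-- The sign of `r_α(ξ₁+ξ₂, ξ₁)` matches the sign of `(ξ₁+ξ₂)ξ₁ξ₂`. -/
lemma r_sign {α : ℝ} (hα : 1 ≤ α) (ξ₁ ξ₂ : ℝ) :
    0 ≤ rAlpha α (ξ₁ + ξ₂) ξ₁ * ((ξ₁ + ξ₂) * ξ₁ * ξ₂) := by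
  have main : ∀ x y : ℝ, 0 ≤ x → 0 ≤ y →
      0 ≤ rAlpha α (x + y) x * ((x + y) * x * y) := by
    intro x y hx hy
    have h := phi_superadd hα hx hy
    have hr : 0 ≤ rAlpha α (x + y) x := by
      have : x + y - x = y := by ring
      rw [rAlpha, this]; linarith
    positivity
  -- handle mixed signs
  have mixed : ∀ x y : ℝ, 0 ≤ x → y ≤ 0 →
      0 ≤ rAlpha α (x + y) x * ((x + y) * x * y) := by
    intro x y hx hy
    rcases le_total (x + y) 0 with hs | hs
    · -- x + y ≤ 0 : then -y = x + (-(x+y)), superadd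
      have h := phi_superadd hα hx (by linarith : (0:ℝ) ≤ -(x + y))
      have hxy : x + -(x + y) = -y := by ring
      rw [hxy] at h
      have hr : 0 ≤ rAlpha α (x + y) x := by
        have h1 : x + y - x = y := by ring
        have e1 : phiAlpha α (x + y) = -phiAlpha α (-(x + y)) := by
          rw [phi_odd]; ring
        have e2 : phiAlpha α y = -phiAlpha α (-y) := by rw [phi_odd]; ring
        rw [rAlpha, h1, e1, e2]; linarith
      have hPn : 0 ≤ (x + y) * x * y := by
        nlinarith [mul_nonneg (mul_nonneg (neg_nonneg.mpr hs) hx) (neg_nonneg.mpr hy)]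
      exact mul_nonneg hr hPn
    · -- x + y ≥ 0 : then x = (x+y) + (-y), superadd
      have h := phi_superadd hα hs (by linarith : (0:ℝ) ≤ -y)
      have hxy : (x + y) + -y = x := by ring
      rw [hxy] at h
      have hr : rAlpha α (x + y) x ≤ 0 := by
        have h1 : x + y - x = y := by ring
        rw [rAlpha, h1]
        have e2 : phiAlpha α y = -phiAlpha α (-y) := by rw [← phi_odd]; ring_nf
        rw [e2]; linarith
      nlinarith [mul_nonneg hs (mul_nonneg hx (neg_nonneg.mpr hy))]
  rcases le_total 0 ξ₁ with h1 | h1 <;> rcases le_total 0 ξ₂ with h2 | h2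
  · exact main ξ₁ ξ₂ h1 h2
  · exact mixed ξ₁ ξ₂ h1 h2
  · have := mixed ξ₂ ξ₁ h2 h1
    have e : ξ₂ + ξ₁ = ξ₁ + ξ₂ := by ring
    rw [e] at this
    have er : rAlpha α (ξ₁ + ξ₂) ξ₂ = rAlpha α (ξ₁ + ξ₂) ξ₁ := by
      rw [rAlpha, rAlpha]
      have e1 : ξ₁ + ξ₂ - ξ₂ = ξ₁ := by ring
      have e2 : ξ₁ + ξ₂ - ξ₁ = ξ₂ := by ring
      rw [e1, e2]; ring
    rw [er] at this; nlinarith [this]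
  · -- both nonpositive: use oddness
    have := main (-ξ₁) (-ξ₂) (by linarith) (by linarith)
    have e : -ξ₁ + -ξ₂ = -(ξ₁ + ξ₂) := by ring
    rw [e] at this
    have er : rAlpha α (-(ξ₁ + ξ₂)) (-ξ₁) = -rAlpha α (ξ₁ + ξ₂) ξ₁ := by
      rw [rAlpha, rAlpha, phi_odd]
      have e1 : -(ξ₁ + ξ₂) - -ξ₁ = -(ξ₁ + ξ₂ - ξ₁) := by ring
      rw [e1, phi_odd, phi_odd]; ring
    rw [er] at this; nlinarith [this]

theorem stmt_7 (α : ℝ) (hα : 4 ≤ α) (ξ₁ ξ₂ μ₁ μ₂ : ℝ)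
    (hne : (ξ₁ + ξ₂) * ξ₁ * ξ₂ ≠ 0) :
    |rAlpha α (ξ₁ + ξ₂) ξ₁| ≤
      |disp α (ξ₁ + ξ₂) (μ₁ + μ₂) - disp α ξ₁ μ₁ - disp α ξ₂ μ₂| := by
  have hξ : ξ₁ + ξ₂ ≠ 0 := by intro h; apply hne; rw [h]; ring
  have h1 : ξ₁ ≠ 0 := by intro h; apply hne; rw [h]; ring
  have h2 : ξ₂ ≠ 0 := by intro h; apply hne; rw [h]; ring
  set P : ℝ := (ξ₁ + ξ₂) * ξ₁ * ξ₂ with hP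
  set K : ℝ := μ₁ * ξ₂ - μ₂ * ξ₁ with hK
  set r : ℝ := rAlpha α (ξ₁ + ξ₂) ξ₁ with hr
  have hdiff : disp α (ξ₁ + ξ₂) (μ₁ + μ₂) - disp α ξ₁ μ₁ - disp α ξ₂ μ₂
      = -(r + K ^ 2 / P) := by
    have e2 : ξ₁ + ξ₂ - ξ₁ = ξ₂ := by ring
    rw [disp, disp, disp, hr, rAlpha, e2, phiAlpha, phiAlpha, phiAlpha]
    field_simp
    ring
  rw [hdiff, abs_neg]
  have hsign : 0 ≤ r * P := r_sign (by linarith) ξ₁ ξ₂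
  have hst : 0 ≤ r * (K ^ 2 / P) := by
    have : r * (K ^ 2 / P) = (r * P) * K ^ 2 / P ^ 2 := by
      field_simp
    rw [this]
    positivity
  set s : ℝ := K ^ 2 / P
  rcases abs_cases r with ⟨hr1, hr2⟩ | ⟨hr1, hr2⟩ <;>
    rcases abs_cases (r + s) with ⟨hs1, hs2⟩ | ⟨hs1, hs2⟩ <;> nlinarith
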